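/- arXiv:1612.02843 — 2 statements merged into one kernel-verified Lean document; each statement's English description precedes it below -/
import Mathlib

section
/- Let G be a finite connected graph of order n ≥ 2. Then the strong resolving graph G_SR is isomorphic to the complete graph K_n on n vertices if and only if G is isomorphic to K_n. -/
open SimpleGraph

variable {V : Type*}

/-- `u` is maximally distant from `v` in `G`: every neighbor `w` of `u`
satisfies `d(v,w) ≤ d(v,u)`. -/
def MaxDistant (G : SimpleGraph V) (u v : V) : Prop :=
  ∀ w, G.Adj u w → G.dist v w ≤ G.dist v u

/-- `u` and `v` are mutually maximally distant in `G`. -/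
def MMD (G : SimpleGraph V) (u v : V) : Prop :=
  MaxDistant G u v ∧ MaxDistant G v u

/-- The boundary of `G`: vertices maximally distant from some vertex. -/
def boundary (G : SimpleGraph V) : Set V := {u | ∃ v, MaxDistant G u v}

/-- The strong resolving graph on the whole vertex set (`G_{SR+I}`):
two vertices are adjacent iff they are distinct and mutually maximally distant. -/
def srGraphI (G : SimpleGraph V) : SimpleGraph V where
  Adj u v := u ≠ v ∧ MMD G u v
  symm := by
    refine ⟨?_⟩
    rintro u v ⟨hne, h1, h2⟩
    exact ⟨hne.symm, h2, h1⟩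
  loopless := by
    refine ⟨?_⟩
    rintro u ⟨hne, _⟩
    exact hne rfl

/-- The strong resolving graph `G_SR`, with vertex set the boundary of `G`. -/
def srGraph (G : SimpleGraph V) : SimpleGraph (boundary G) :=
  (srGraphI G).induce (boundary G)

/-- `u` and `v` are true twins: distinct vertices with equal closed neighborhoods. -/
def TrueTwins (G : SimpleGraph V) (u v : V) : Prop :=
  u ≠ v ∧ insert u (G.neighborSet u) = insert v (G.neighborSet v)

/-- `u` and `v` are false twins: distinct vertices with equal open neighborhoods. -/
def FalseTwins (G : SimpleGraph V) (u v : V) : Prop :=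
  u ≠ v ∧ G.neighborSet u = G.neighborSet v

/-- A vertex is simplicial if its neighborhood induces a complete graph. -/
def IsSimplicial (G : SimpleGraph V) (v : V) : Prop :=
  ∀ a b, G.Adj v a → G.Adj v b → a ≠ b → G.Adj a b

/-- `w` strongly resolves `u` and `v`. -/
def StronglyResolves (G : SimpleGraph V) (w u v : V) : Prop :=
  G.dist w u = G.dist w v + G.dist v u ∨ G.dist w v = G.dist w u + G.dist u v

/-- `S` is a strong metric generator for `G`. -/
def IsStrongMetricGenerator (G : SimpleGraph V) (S : Set V) : Prop :=
  ∀ u v : V, u ≠ v → ∃ w ∈ S, StronglyResolves G w u v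

/-- The strong metric dimension of `G`. -/
noncomputable def sdim (G : SimpleGraph V) : ℕ :=
  sInf {n | ∃ S : Set V, S.ncard = n ∧ IsStrongMetricGenerator G S}

/-- `S` is a vertex cover of `H`. -/
def IsVertexCover (H : SimpleGraph V) (S : Set V) : Prop :=
  ∀ u v : V, H.Adj u v → u ∈ S ∨ v ∈ S

/-- The vertex cover number of `H`. -/
noncomputable def vertexCoverNumber (H : SimpleGraph V) : ℕ :=
  sInf {n | ∃ S : Set V, S.ncard = n ∧ _root_.IsVertexCover H S}

/-- The graph `G*`: distinct vertices adjacent iff at distance at least two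
or true twins. -/
def GStar (G : SimpleGraph V) : SimpleGraph V where
  Adj u v := u ≠ v ∧ (2 ≤ G.dist u v ∨ TrueTwins G u v)
  symm := by
    refine ⟨?_⟩
    rintro u v ⟨hne, h | h⟩
    · exact ⟨hne.symm, Or.inl (by rwa [G.dist_comm])⟩
    · exact ⟨hne.symm, Or.inr ⟨h.1.symm, h.2.symm⟩⟩
  loopless := by
    refine ⟨?_⟩
    rintro u ⟨hne, _⟩
    exact hne rfl

/-- The direct (tensor) product of two graphs. -/
def DirectProd {α β : Type*} (G : SimpleGraph α) (H : SimpleGraph β) :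
    SimpleGraph (α × β) where
  Adj x y := G.Adj x.1 y.1 ∧ H.Adj x.2 y.2
  symm := ⟨fun _ _ h => ⟨h.1.symm, h.2.symm⟩⟩
  loopless := ⟨fun x h => G.loopless.irrefl x.1 h.1⟩

/-- The strong product of two graphs. -/
def StrongProd {α β : Type*} (G : SimpleGraph α) (H : SimpleGraph β) :
    SimpleGraph (α × β) where
  Adj x y := x ≠ y ∧ (x.1 = y.1 ∨ G.Adj x.1 y.1) ∧ (x.2 = y.2 ∨ H.Adj x.2 y.2)
  symm := by
    refine ⟨?_⟩
    rintro x y ⟨hne, h1, h2⟩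
    exact ⟨hne.symm, h1.imp Eq.symm Adj.symm, h2.imp Eq.symm Adj.symm⟩
  loopless := by
    refine ⟨?_⟩
    rintro x ⟨hne, _⟩
    exact hne rfl

/-- The Cartesian sum (disjunctive product) of two graphs. -/
def CartSum {α β : Type*} (G : SimpleGraph α) (H : SimpleGraph β) :
    SimpleGraph (α × β) where
  Adj x y := G.Adj x.1 y.1 ∨ H.Adj x.2 y.2
  symm := ⟨fun _ _ h => h.imp Adj.symm Adj.symm⟩
  loopless := ⟨fun x h => h.elim (G.loopless.irrefl x.1) (H.loopless.irrefl x.2)⟩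

/-- The lexicographic product of two graphs. -/
def LexProd {α β : Type*} (G : SimpleGraph α) (H : SimpleGraph β) :
    SimpleGraph (α × β) where
  Adj x y := G.Adj x.1 y.1 ∨ (x.1 = y.1 ∧ H.Adj x.2 y.2)
  symm := ⟨fun _ _ h => h.imp Adj.symm (fun h => ⟨h.1.symm, h.2.symm⟩)⟩
  loopless := ⟨fun x h => h.elim (G.loopless.irrefl x.1) (fun h => H.loopless.irrefl x.2 h.2)⟩

/-- The disjoint union of `n` copies of the complete graph on `m` vertices. -/
def CopiesComplete (n m : ℕ) : SimpleGraph (Fin n × Fin m) where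
  Adj x y := x.1 = y.1 ∧ x.2 ≠ y.2
  symm := ⟨fun _ _ h => ⟨h.1.symm, h.2.symm⟩⟩
  loopless := ⟨fun x h => h.2 rfl⟩

/-- Every pair of vertices lies on a common cycle of length five. -/
def C5Connected (G : SimpleGraph V) : Prop :=
  ∀ u v : V, ∃ (w : V) (c : G.Walk w w), c.IsCycle ∧ c.length = 5 ∧
    u ∈ c.support ∧ v ∈ c.support

/-!
If `G_SR ≅ K_n`, the boundary has `n` vertices, so it is all of `V`, and any two distinct vertices
are mutually maximally distant. Then a vertex `a` adjacent to `x` is maximally distant from `x`, so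
every neighbour of `a` lies within distance one of `x`: the closed neighbourhood of `x` is closed under
adjacency and, `G` being connected, is everything. Conversely, in `K_n` every vertex is maximally
distant from every other one.
-/

variable {W : Type*}

theorem SimpleGraph.Iso.eq_top {G : SimpleGraph V} (e : G ≃g (⊤ : SimpleGraph W)) : G = ⊤ := by
  ext u v
  rw [← e.map_adj_iff, top_adj, top_adj, e.injective.ne_iff]

theorem nonempty_iso_top_iff [Fintype V] {G : SimpleGraph V} :
    Nonempty (G ≃g (⊤ : SimpleGraph (Fin (Fintype.card V)))) ↔ G = ⊤ := by
  refine ⟨fun ⟨e⟩ => e.eq_top, ?_⟩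
  rintro rfl
  exact ⟨Iso.completeGraph (Fintype.equivFin V)⟩

theorem nonempty_induce_iso_top_iff [Fintype W] {H : SimpleGraph W} {s : Set W} :
    Nonempty (H.induce s ≃g (⊤ : SimpleGraph (Fin (Fintype.card W)))) ↔
      s = Set.univ ∧ H = ⊤ := by
  classical
  constructor
  · rintro ⟨e⟩
    have hs : s = Set.univ :=
      (set_fintype_card_eq_univ_iff s).mp (by simpa using Fintype.card_congr e.toEquiv)
    subst hs
    exact ⟨rfl, SimpleGraph.Iso.eq_top ((induceUnivIso H).symm.trans e)⟩
  · rintro ⟨rfl, rfl⟩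
    exact ⟨(induceUnivIso ⊤).trans (Iso.completeGraph (Fintype.equivFin W))⟩

theorem maxDistant_top_of_ne {u v : V} (h : u ≠ v) : MaxDistant (⊤ : SimpleGraph V) u v := by
  intro w _
  rw [dist_top_of_ne h.symm]
  rcases eq_or_ne v w with rfl | hvw
  · simp
  · rw [dist_top_of_ne hvw]

theorem boundary_top : boundary (⊤ : SimpleGraph V) = Set.univ := by
  refine Set.eq_univ_of_forall fun u => ?_
  by_cases h : ∃ v, v ≠ u
  · obtain ⟨v, hv⟩ := h
    exact ⟨v, maxDistant_top_of_ne hv.symm⟩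
  · exact ⟨u, fun w huw => absurd ⟨w, huw.ne.symm⟩ h⟩

theorem srGraphI_top : srGraphI (⊤ : SimpleGraph V) = ⊤ := by
  ext u v
  exact ⟨fun h => h.1, fun h => ⟨h, maxDistant_top_of_ne h, maxDistant_top_of_ne h.symm⟩⟩

theorem SimpleGraph.Connected.eq_top_of_forall_adj_maxDistant {G : SimpleGraph V}
    (hG : G.Connected) (h : ∀ u v, G.Adj u v → MaxDistant G u v) : G = ⊤ := by
  have hdist : ∀ x y, G.dist x y ≤ 1 := by
    intro x y
    obtain ⟨p⟩ := hG.preconnected y x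
    induction p with
    | nil => simp
    | @cons y z x hyz _ ih =>
      rcases eq_or_ne z x with rfl | hzx
      · exact (dist_eq_one_iff_adj.mpr hyz.symm).le
      · have hxz : G.dist x z = 1 := le_antisymm ih (hG.pos_dist_of_ne hzx.symm)
        exact (h z x (dist_eq_one_iff_adj.mp hxz).symm y hyz.symm).trans hxz.le
  ext x y
  refine ⟨Adj.ne, fun hxy => dist_eq_one_iff_adj.mp ?_⟩
  exact le_antisymm (hdist x y) (hG.pos_dist_of_ne hxy)

theorem srGraphI_eq_top_iff {G : SimpleGraph V} (hG : G.Connected) :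
    srGraphI G = ⊤ ↔ G = ⊤ := by
  refine ⟨fun h => hG.eq_top_of_forall_adj_maxDistant fun u v huv => ?_, ?_⟩
  · have : (srGraphI G).Adj u v := h ▸ huv.ne
    exact this.2.1
  · rintro rfl
    exact srGraphI_top

theorem stmt4_general [Fintype V] (G : SimpleGraph V) (hG : G.Connected) :
    Nonempty (srGraph G ≃g (⊤ : SimpleGraph (Fin (Fintype.card V)))) ↔
      Nonempty (G ≃g (⊤ : SimpleGraph (Fin (Fintype.card V)))) := by
  rw [srGraph, nonempty_induce_iso_top_iff, nonempty_iso_top_iff, srGraphI_eq_top_iff hG]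
  exact and_iff_right_of_imp fun h => h ▸ boundary_top

theorem stmt4 [Fintype V] (G : SimpleGraph V) (hG : G.Connected)
    (hn : 2 ≤ Fintype.card V) :
    Nonempty (srGraph G ≃g (⊤ : SimpleGraph (Fin (Fintype.card V)))) ↔
      Nonempty (G ≃g (⊤ : SimpleGraph (Fin (Fintype.card V)))) :=
  stmt4_general G hG
end

section
/- Let H be a finite connected graph of diameter at least four that has no pair of false twin vertices. Then the complement H^c is a connected graph of diameter two with no pair of true twin vertices, and the strong resolving graph (H^c)_SR is isomorphic to H. In particular, H is the strong resolving graph of a true twin-free graph of diameter two. -/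
open SimpleGraph

variable {V : Type*}

/-! If `d(H) ≥ 4`, no edge `uv` of `H` dominates `H` (else any two vertices would be joined
through `u` or `v` by a walk of length at most `3`), so `u` and `v` have a common neighbour in
`Hᶜ`. Hence `Hᶜ` has diameter `2`, and its non-adjacent pairs, the edges of `H`, are at distance
`2`, so they are mutually maximally distant; as `H` has no isolated vertex, every vertex lies in
the boundary of `Hᶜ`. Conversely an adjacent pair `u v` is mutually maximally distant only if
`N[u] = N[v]`, and true twins of `Hᶜ` are exactly false twins of `H`. So the MMD pairs of `Hᶜ`
are exactly the edges of `H`. -/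

namespace SimpleGraph

section LargeDiameter

variable {H : SimpleGraph V} {u v : V}

lemma ediam_le_three_of_adj_of_forall_edist_le_one (huv : H.Adj u v)
    (hdom : ∀ w, H.edist u w ≤ 1 ∨ H.edist v w ≤ 1) : H.ediam ≤ 3 := by
  have hnear : ∀ w, ∃ a, (a = u ∨ a = v) ∧ H.edist a w ≤ 1 := fun w =>
    (hdom w).elim (fun h => ⟨u, .inl rfl, h⟩) (fun h => ⟨v, .inr rfl, h⟩)
  refine ediam_le_of_edist_le fun x y => ?_
  obtain ⟨a, ha, hax⟩ := hnear x
  obtain ⟨b, hb, hby⟩ := hnear y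
  have hab : H.edist a b ≤ 1 := by
    rw [edist_le_one_iff_adj_or_eq]
    rcases ha with rfl | rfl <;> rcases hb with rfl | rfl <;> simp [huv, huv.symm]
  calc H.edist x y ≤ H.edist x a + H.edist a b + H.edist b y :=
        H.edist_triangle.trans (add_le_add_left H.edist_triangle _)
    _ ≤ 1 + 1 + 1 := by rw [edist_comm]; gcongr
    _ = 3 := by norm_num

lemma exists_compl_adj_compl_adj_of_adj (h : 3 < H.ediam) (huv : H.Adj u v) :
    ∃ w, Hᶜ.Adj u w ∧ Hᶜ.Adj w v := by
  by_contra! hno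
  refine (ediam_le_three_of_adj_of_forall_edist_le_one huv fun w => ?_).not_gt h
  simp only [edist_le_one_iff_adj_or_eq]
  by_contra! hw
  exact hno w ((compl_adj H u w).mpr ⟨hw.1.2, hw.1.1⟩)
    ((compl_adj H w v).mpr ⟨hw.2.2.symm, fun h => hw.2.1 h.symm⟩)

lemma ediam_compl_le_two_of_three_lt_ediam (h : 3 < H.ediam) : Hᶜ.ediam ≤ 2 := by
  refine ediam_le_of_edist_le fun u v => ?_
  by_cases huv : H.Adj u v
  · obtain ⟨w, huw, hwv⟩ := exists_compl_adj_compl_adj_of_adj h huv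
    simpa using (Walk.cons huw (Walk.cons hwv Walk.nil)).edist_le
  · have : Hᶜ.edist u v ≤ 1 := by
      rw [edist_le_one_iff_adj_or_eq, compl_adj]
      tauto
    exact this.trans (by norm_num)

end LargeDiameter

section Twins

variable {G : SimpleGraph V} {u v : V}

lemma trueTwins_compl_iff : TrueTwins Gᶜ u v ↔ FalseTwins G u v := by
  have hclosed : ∀ a, insert a (Gᶜ.neighborSet a) = (G.neighborSet a)ᶜ := fun a => by
    rw [neighborSet_compl, Set.insert_sdiff_singleton,
      Set.insert_eq_of_mem (Set.mem_compl G.notMem_neighborSet_self)]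
  simp only [TrueTwins, FalseTwins, hclosed, compl_inj_iff]

lemma MaxDistant.insert_neighborSet_subset (h : MaxDistant G u v) (huv : G.Adj u v) :
    insert u (G.neighborSet u) ⊆ insert v (G.neighborSet v) := by
  rintro w (rfl | hw)
  · exact .inr huv.symm
  have hr : G.Reachable v w := huv.symm.reachable.trans (Adj.reachable hw)
  have : G.edist v w ≤ 1 := by
    rw [← hr.coe_dist_eq_edist]
    exact_mod_cast (h w hw).trans (dist_eq_one_iff_adj.mpr huv.symm).le
  rcases edist_le_one_iff_adj_or_eq.mp this with hvw | rfl
  · exact .inr hvw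
  · exact .inl rfl

lemma MMD.trueTwins_of_adj (h : MMD G u v) (huv : G.Adj u v) : TrueTwins G u v :=
  ⟨huv.ne, (h.1.insert_neighborSet_subset huv).antisymm
    (h.2.insert_neighborSet_subset huv.symm)⟩

end Twins

section DiameterTwo

variable {G : SimpleGraph V} {u v : V}

lemma dist_le_two_of_ediam_le_two (hG : G.ediam ≤ 2) (u v : V) : G.dist u v ≤ 2 :=
  ENat.toNat_le_of_le_natCast (edist_le_ediam.trans hG)

lemma dist_eq_two_of_ediam_le_two (hG : G.ediam ≤ 2) (hne : u ≠ v) (hna : ¬G.Adj u v) :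
    G.dist u v = 2 :=
  (dist_le_two_of_ediam_le_two hG u v).antisymm <|
    Reachable.one_lt_dist_of_ne_of_not_adj
      (preconnected_of_ediam_ne_top (ne_top_of_le_ne_top (by decide) hG) u v) hne hna

lemma maxDistant_of_ediam_le_two (hG : G.ediam ≤ 2) (hne : v ≠ u) (hna : ¬G.Adj v u) :
    MaxDistant G u v :=
  fun w _ => (dist_eq_two_of_ediam_le_two hG hne hna).symm ▸ dist_le_two_of_ediam_le_two hG v w

lemma diam_eq_two_of_ediam_le_two (hG : G.ediam ≤ 2) (hne : u ≠ v) (hna : ¬G.Adj u v) :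
    G.diam = 2 :=
  (ENat.toNat_le_of_le_natCast hG).antisymm <|
    (dist_eq_two_of_ediam_le_two hG hne hna).symm.le.trans
      (dist_le_diam (ne_top_of_le_ne_top (by decide) hG))

lemma srGraphI_eq_compl_of_ediam_le_two (hG : G.ediam ≤ 2) (htw : ∀ u v, ¬TrueTwins G u v) :
    srGraphI G = Gᶜ := by
  ext u v
  change u ≠ v ∧ MMD G u v ↔ _
  rw [compl_adj]
  refine and_congr_right fun hne =>
    ⟨fun hm hadj => htw u v (hm.trueTwins_of_adj hadj), fun hna =>
      ⟨maxDistant_of_ediam_le_two hG hne.symm (fun h => hna h.symm),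
        maxDistant_of_ediam_le_two hG hne hna⟩⟩

lemma mem_boundary_of_not_isUniversal (hG : G.ediam ≤ 2) (hu : ¬G.IsUniversal u) :
    u ∈ boundary G := by
  simp only [IsUniversal, not_forall] at hu
  obtain ⟨v, hne, hna⟩ := hu
  exact ⟨v, maxDistant_of_ediam_le_two hG (Ne.symm hne) (fun h => hna h.symm)⟩

lemma nonempty_srGraph_iso_compl (hG : G.ediam ≤ 2) (htw : ∀ u v, ¬TrueTwins G u v)
    (hnu : ∀ u, ¬G.IsUniversal u) : Nonempty (srGraph G ≃g Gᶜ) := by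
  refine ⟨⟨Equiv.subtypeUnivEquiv fun u => mem_boundary_of_not_isUniversal hG (hnu u), ?_⟩⟩
  intro a b
  simp [srGraph, srGraphI_eq_compl_of_ediam_le_two hG htw]

end DiameterTwo

end SimpleGraph

theorem stmt11_general (H : SimpleGraph V) (hH : H.Connected)
    (hd : 4 ≤ H.diam) (hft : ∀ u v : V, ¬ FalseTwins H u v) :
    Hᶜ.Connected ∧ Hᶜ.diam = 2 ∧ (∀ u v : V, ¬ TrueTwins Hᶜ u v) ∧
      Nonempty (srGraph Hᶜ ≃g H) := by
  have : Nontrivial V := nontrivial_of_diam_ne_zero (G := H) (by omega)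
  have hlarge : 3 < H.ediam :=
    lt_of_lt_of_le (by exact_mod_cast hd) (ENat.natCast_toNat_le_self _)
  have hG : Hᶜ.ediam ≤ 2 := ediam_compl_le_two_of_three_lt_ediam hlarge
  have htw : ∀ u v, ¬TrueTwins Hᶜ u v := fun u v => trueTwins_compl_iff.not.mpr (hft u v)
  have hnbr : ∀ u, ∃ v, H.Adj u v := hH.preconnected.exists_adj_of_nontrivial
  obtain ⟨u, v, huv⟩ : ∃ u v, H.Adj u v := ⟨_, hnbr hH.nonempty.some⟩
  refine ⟨?_, diam_eq_two_of_ediam_le_two hG huv.ne (by simp [huv]), htw, ?_⟩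
  · have := hH.nonempty
    exact connected_of_ediam_ne_top (ne_top_of_le_ne_top (by decide) hG)
  · have hnu : ∀ u, ¬Hᶜ.IsUniversal u := fun u =>
      isUniversal_compl_iff_isIsolated.not.mpr (exists_adj_iff_not_isIsolated.mp (hnbr u))
    simpa only [compl_compl] using nonempty_srGraph_iso_compl hG htw hnu

theorem stmt11 [Fintype V] (H : SimpleGraph V) (hH : H.Connected)
    (hd : 4 ≤ H.diam) (hft : ∀ u v : V, ¬ FalseTwins H u v) :
    Hᶜ.Connected ∧ Hᶜ.diam = 2 ∧ (∀ u v : V, ¬ TrueTwins Hᶜ u v) ∧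
      Nonempty (srGraph Hᶜ ≃g H) :=
  stmt11_general H hH hd hft
end
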